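/- arXiv:2305.04837 — 4 statements merged into one kernel-verified Lean document; each statement's English description precedes it below -/
import Mathlib

section
/- Let (ζ*, β*) minimize the ODM dual objective d over the nonnegative orthant {(ζ, β) : ζ ⪰ 0, β ⪰ 0}, and let (ζ̃*, β̃*) minimize the approximate dual objective d̃ over the nonnegative orthant. Set U = max(‖ζ*‖_∞, ‖β*‖_∞, ‖ζ̃*‖_∞, ‖β̃*‖_∞) and Q̂ = Σ_{i,j : P(i) ≠ P(j)} |Q_{ij}|. Then 0 ≤ d(ζ̃*, β̃*) − d(ζ*, β*) ≤ U²(Q̂ + M(M − m)c). -/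
open Finset

/-- Theorem 1 (objective-value gap) of "Scalable Optimal Margin Distribution Machine":
if `(ζs, βs)` minimizes the ODM dual objective `d` over the nonnegative orthant and
`(ζt, βt)` minimizes the block-diagonal approximate dual objective `dt` over the
nonnegative orthant, then
`0 ≤ d ζt βt - d ζs βs ≤ U² (Q̂ + M (M - m) c)`. -/
theorem sodm_objective_gap
    (M K m : ℕ) (c υ θ : ℝ)
    (hc : 0 < c) (hυ0 : 0 < υ) (hυ1 : υ ≤ 1) (hθ0 : 0 ≤ θ) (hθ1 : θ < 1)
    (Q : Matrix (Fin M) (Fin M) ℝ) (hQ : Q.PosSemidef)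
    (P : Fin M → Fin K) (hM : M = K * m)
    (hfiber : ∀ k : Fin K, (Finset.univ.filter fun i => P i = k).card = m)
    (d dt : (Fin M → ℝ) → (Fin M → ℝ) → ℝ)
    (hd : ∀ ζ β : Fin M → ℝ, d ζ β =
      (1/2) * ∑ i, ∑ j, (ζ i - β i) * (ζ j - β j) * Q i j
      + ((M : ℝ) * c / 2) * (υ * ∑ i, (ζ i)^2 + ∑ i, (β i)^2)
      + (θ - 1) * ∑ i, ζ i + (θ + 1) * ∑ i, β i)
    (hdt : ∀ ζ β : Fin M → ℝ, dt ζ β =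
      (1/2) * ∑ i, ∑ j, (ζ i - β i) * (ζ j - β j) * (if P i = P j then Q i j else 0)
      + ((m : ℝ) * c / 2) * (υ * ∑ i, (ζ i)^2 + ∑ i, (β i)^2)
      + (θ - 1) * ∑ i, ζ i + (θ + 1) * ∑ i, β i)
    (ζs βs ζt βt : Fin M → ℝ)
    (hζs : ∀ i, 0 ≤ ζs i) (hβs : ∀ i, 0 ≤ βs i)
    (hζt : ∀ i, 0 ≤ ζt i) (hβt : ∀ i, 0 ≤ βt i)
    (hmin : ∀ ζ β : Fin M → ℝ, (∀ i, 0 ≤ ζ i) → (∀ i, 0 ≤ β i) → d ζs βs ≤ d ζ β)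
    (hmint : ∀ ζ β : Fin M → ℝ, (∀ i, 0 ≤ ζ i) → (∀ i, 0 ≤ β i) → dt ζt βt ≤ dt ζ β)
    (U Qhat : ℝ)
    (hU : U = max (max ‖ζs‖ ‖βs‖) (max ‖ζt‖ ‖βt‖))
    (hQhat : Qhat = ∑ i, ∑ j, if P i ≠ P j then |Q i j| else 0) :
    0 ≤ d ζt βt - d ζs βs ∧
      d ζt βt - d ζs βs ≤ U^2 * (Qhat + (M : ℝ) * ((M : ℝ) - (m : ℝ)) * c) := by

  classical
  have hgap0 : 0 ≤ d ζt βt - d ζs βs := by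
    have := hmin ζt βt hζt hβt; linarith
  refine ⟨hgap0, ?_⟩
  have hU0 : 0 ≤ U := by
    rw [hU]; positivity
  have hble : ∀ (v : Fin M → ℝ), ‖v‖ ≤ U → ∀ i, |v i| ≤ U := by
    intro v hv i
    exact le_trans (by simpa using norm_le_pi_norm v i) hv
  have hζsU : ∀ i, |ζs i| ≤ U := hble ζs (by rw [hU]; exact le_max_of_le_left (le_max_left _ _))
  have hβsU : ∀ i, |βs i| ≤ U := hble βs (by rw [hU]; exact le_max_of_le_left (le_max_right _ _))
  have hζtU : ∀ i, |ζt i| ≤ U := hble ζt (by rw [hU]; exact le_max_of_le_right (le_max_left _ _))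
  have hβtU : ∀ i, |βt i| ≤ U := hble βt (by rw [hU]; exact le_max_of_le_right (le_max_right _ _))
  have hsubU : ∀ (ζ β : Fin M → ℝ), (∀ i, 0 ≤ ζ i) → (∀ i, 0 ≤ β i) →
      (∀ i, |ζ i| ≤ U) → (∀ i, |β i| ≤ U) → ∀ i, |ζ i - β i| ≤ U := by
    intro ζ β h0 h0' hζ hβ i
    have h1 := hζ i; have h2 := hβ i
    have h3 := h0 i; have h4 := h0' i
    rw [abs_le] at *
    constructor <;> [linarith [h2.2]; linarith [h1.2]]
  have hsubt := hsubU ζt βt hζt hβt hζtU hβtU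
  have hsubs := hsubU ζs βs hζs hβs hζsU hβsU
  rcases Nat.eq_zero_or_pos M with hM0 | hMpos
  · subst hM0
    have hd0 : d ζt βt = 0 := by rw [hd]; simp
    have hd0' : d ζs βs = 0 := by rw [hd]; simp
    have hQ0 : Qhat = 0 := by rw [hQhat]; simp
    rw [hd0, hd0', hQ0]
    simp
  · have hmM : (m : ℝ) ≤ (M : ℝ) := by
      have hK : 1 ≤ K := by
        rcases Nat.eq_zero_or_pos K with h | h
        · exfalso; rw [h, Nat.zero_mul] at hM; omega
        · exact h
      have : m ≤ M := by
        rw [hM]; exact Nat.le_mul_of_pos_left m (by omega)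
      exact_mod_cast this
    set f : (Fin M → ℝ) → (Fin M → ℝ) → ℝ := fun ζ β =>
      ∑ i, ∑ j, if P i = P j then 0 else (ζ i - β i) * (ζ j - β j) * Q i j with hf
    have hdiff : ∀ ζ β : Fin M → ℝ, d ζ β - dt ζ β =
        (1/2) * f ζ β + (((M : ℝ) - m) * c / 2) * (υ * ∑ i, (ζ i)^2 + ∑ i, (β i)^2) := by
      intro ζ β
      rw [hd, hdt]
      have h1 : ∑ i, ∑ j, (ζ i - β i) * (ζ j - β j) * Q i j
          = (∑ i, ∑ j, (ζ i - β i) * (ζ j - β j) * (if P i = P j then Q i j else 0)) + f ζ β := by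
        rw [hf, ← Finset.sum_add_distrib]
        refine Finset.sum_congr rfl fun i _ => ?_
        rw [← Finset.sum_add_distrib]
        refine Finset.sum_congr rfl fun j _ => ?_
        by_cases h : P i = P j <;> simp [h]
      rw [h1]; ring
    have hfbound : ∀ (ζ β : Fin M → ℝ), (∀ i, |ζ i - β i| ≤ U) → |f ζ β| ≤ U^2 * Qhat := by
      intro ζ β hb
      rw [hQhat, Finset.mul_sum]
      refine (Finset.abs_sum_le_sum_abs _ _).trans (Finset.sum_le_sum fun i _ => ?_)
      rw [Finset.mul_sum]
      refine (Finset.abs_sum_le_sum_abs _ _).trans (Finset.sum_le_sum fun j _ => ?_)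
      by_cases h : P i = P j
      · simp [h]
      · rw [if_neg h, if_pos h]
        have h1 := hb i; have h2 := hb j
        have h3 : |(ζ i - β i) * (ζ j - β j) * Q i j|
            = |ζ i - β i| * |ζ j - β j| * |Q i j| := by rw [abs_mul, abs_mul]
        rw [h3]
        have h4 : |ζ i - β i| * |ζ j - β j| ≤ U * U :=
          mul_le_mul h1 h2 (abs_nonneg _) hU0
        calc |ζ i - β i| * |ζ j - β j| * |Q i j| ≤ U * U * |Q i j| :=
              mul_le_mul_of_nonneg_right h4 (abs_nonneg _)
          _ = U^2 * |Q i j| := by ring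
    have hsq : ∀ (v : Fin M → ℝ), (∀ i, |v i| ≤ U) → ∑ i, (v i)^2 ≤ (M : ℝ) * U^2 := by
      intro v hv
      calc ∑ i, (v i)^2 ≤ ∑ _i : Fin M, U^2 := by
            refine Finset.sum_le_sum fun i _ => ?_
            have : (v i)^2 = |v i|^2 := (sq_abs _).symm
            rw [this]
            exact pow_le_pow_left₀ (abs_nonneg _) (hv i) 2
        _ = (M : ℝ) * U^2 := by simp [Finset.card_fin, mul_comm]
    have hsq0 : ∀ (v : Fin M → ℝ), (0:ℝ) ≤ ∑ i, (v i)^2 := fun v =>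
      Finset.sum_nonneg fun i _ => sq_nonneg _
    have hk : (0:ℝ) ≤ ((M : ℝ) - m) * c / 2 := by
      have : (0:ℝ) ≤ (M : ℝ) - m := by linarith
      positivity
    have key : dt ζt βt ≤ dt ζs βs := hmint ζs βs hζs hβs
    have hdt1 := hdiff ζt βt
    have hdt2 := hdiff ζs βs
    have hf1 : f ζt βt ≤ U^2 * Qhat := (abs_le.mp (hfbound ζt βt hsubt)).2
    have hf2 : -(U^2 * Qhat) ≤ f ζs βs := (abs_le.mp (hfbound ζs βs hsubs)).1
    have hXt : υ * ∑ i, (ζt i)^2 + ∑ i, (βt i)^2 ≤ 2 * ((M : ℝ) * U^2) := by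
      have h1 := hsq ζt hζtU
      have h2 := hsq βt hβtU
      have h3 := hsq0 ζt
      nlinarith
    have hXs : (0:ℝ) ≤ υ * ∑ i, (ζs i)^2 + ∑ i, (βs i)^2 := by
      have h1 := hsq0 ζs; have h2 := hsq0 βs
      nlinarith
    have hprod1 : (((M : ℝ) - m) * c / 2) * (υ * ∑ i, (ζt i)^2 + ∑ i, (βt i)^2)
        ≤ (((M : ℝ) - m) * c / 2) * (2 * ((M : ℝ) * U^2)) :=
      mul_le_mul_of_nonneg_left hXt hk
    have hprod2 : (0:ℝ) ≤ (((M : ℝ) - m) * c / 2) * (υ * ∑ i, (ζs i)^2 + ∑ i, (βs i)^2) :=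
      mul_nonneg hk hXs
    linarith [hdt1, hdt2, hf1, hf2, hprod1, hprod2, key]
end

section
/- Let (ζ*, β*) minimize the ODM dual objective d over the nonnegative orthant, and let (ζ̃*, β̃*) minimize the approximate dual objective d̃ over the nonnegative orthant. Set α* = [ζ*; β*] ∈ ℝ^{2M}, α̃* = [ζ̃*; β̃*] ∈ ℝ^{2M}, U = max(‖α*‖_∞, ‖α̃*‖_∞) and Q̂ = Σ_{i,j : P(i) ≠ P(j)} |Q_{ij}|. Then ‖α̃* − α*‖² ≤ (U²/(Mcυ)) · (Q̂ + M(M − m)c). -/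
/-!
Both minimizers satisfy the first-order optimality condition over the nonnegative orthant.
Testing each against the other and adding gives, with `Δ = α̃* - α*` and `w = ζ - β`,
`M c (υ‖Δζ‖² + ‖Δβ‖²) ≤ (Δζ - Δβ)ᵀ Q w* - (Δζ - Δβ)ᵀ Q̃ w̃ + (M - m) c (υ ζ̃ᵀΔζ + β̃ᵀΔβ)`.
By polarization and positive semidefiniteness of `Q` and `Q̃`, the first part is at most
`(w̃ᵀ R w̃ - w*ᵀ R w*) / 2 ≤ U² Q̂` with `R = Q - Q̃`, since `|wᵢ| ≤ U`. In the second part, the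
minimizer of `d̃` never has `ζ̃ᵢ` and `β̃ᵢ` both positive, which bounds each summand by `U²`.
-/

open Finset Matrix Filter Topology

lemma nonneg_of_eventually_le_add_mul_add_sq {a b c : ℝ}
    (h : ∀ᶠ t in 𝓝[>] (0 : ℝ), c ≤ c + t * a + t ^ 2 * b) : 0 ≤ a := by
  have hlim : Tendsto (fun t : ℝ => a + t * b) (𝓝[>] 0) (𝓝 a) :=
    (Continuous.tendsto' (by fun_prop) 0 a (by simp)).mono_left nhdsWithin_le_nhds
  refine ge_of_tendsto hlim ?_
  filter_upwards [h, self_mem_nhdsWithin] with t ht (htpos : 0 < t)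
  refine nonneg_of_mul_nonneg_right ?_ htpos
  linarith [show t * (a + t * b) = t * a + t ^ 2 * b by ring]

section Matrix

variable {ι R : Type*} [Fintype ι]

lemma sum_sum_mul_mul_eq_dotProduct_mulVec [CommSemiring R] (A : Matrix ι ι R) (x y : ι → R) :
    ∑ i, ∑ j, x i * y j * A i j = x ⬝ᵥ A *ᵥ y := by
  simp only [dotProduct, mulVec, Finset.mul_sum]
  exact Finset.sum_congr rfl fun i _ => Finset.sum_congr rfl fun j _ => by ring

lemma Matrix.IsSymm.dotProduct_mulVec_comm [CommSemiring R] {A : Matrix ι ι R} (hA : A.IsSymm)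
    (x y : ι → R) : x ⬝ᵥ A *ᵥ y = y ⬝ᵥ A *ᵥ x := by
  rw [dotProduct_mulVec, ← mulVec_transpose, hA.eq, dotProduct_comm]

lemma abs_dotProduct_mulVec_le (A : Matrix ι ι ℝ) {x : ι → ℝ} {U : ℝ} (hx : ∀ i, |x i| ≤ U) :
    |x ⬝ᵥ A *ᵥ x| ≤ U ^ 2 * ∑ i, ∑ j, |A i j| := by
  rw [← sum_sum_mul_mul_eq_dotProduct_mulVec, Finset.mul_sum]
  refine (Finset.abs_sum_le_sum_abs _ _).trans (Finset.sum_le_sum fun i _ => ?_)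
  rw [Finset.mul_sum]
  refine (Finset.abs_sum_le_sum_abs _ _).trans (Finset.sum_le_sum fun j _ => ?_)
  rw [abs_mul, abs_mul, sq]
  gcongr
  · exact (abs_nonneg _).trans (hx i)
  · exact hx i
  · exact hx j

lemma sub_dotProduct_mulVec_sub_le_half {A B : Matrix ι ι ℝ} (hA : A.PosSemidef)
    (hB : B.PosSemidef) (x y : ι → ℝ) :
    (y - x) ⬝ᵥ A *ᵥ x - (y - x) ⬝ᵥ B *ᵥ y
      ≤ (y ⬝ᵥ (A - B) *ᵥ y - x ⬝ᵥ (A - B) *ᵥ x) / 2 := by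
  have hAs : A.IsSymm := isHermitian_iff_isSymm.1 hA.isHermitian
  have hBs : B.IsSymm := isHermitian_iff_isSymm.1 hB.isHermitian
  have hA0 := hA.dotProduct_mulVec_nonneg (y - x)
  have hB0 := hB.dotProduct_mulVec_nonneg (y - x)
  simp only [star_trivial] at hA0 hB0
  have polarization : (y - x) ⬝ᵥ A *ᵥ x - (y - x) ⬝ᵥ B *ᵥ y
      = (y ⬝ᵥ (A - B) *ᵥ y - x ⬝ᵥ (A - B) *ᵥ x) / 2
        - ((y - x) ⬝ᵥ A *ᵥ (y - x) + (y - x) ⬝ᵥ B *ᵥ (y - x)) / 2 := by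
    simp only [sub_mulVec, mulVec_sub, sub_dotProduct, dotProduct_sub,
      hAs.dotProduct_mulVec_comm y x, hBs.dotProduct_mulVec_comm y x]
    ring
  linarith

def Matrix.blockApprox {κ : Type*} [DecidableEq κ] [Zero R] (Q : Matrix ι ι R) (P : ι → κ) :
    Matrix ι ι R :=
  Matrix.of fun i j => if P i = P j then Q i j else 0

lemma Matrix.PosSemidef.blockApprox {κ : Type*} [Fintype κ] [DecidableEq κ] {Q : Matrix ι ι ℝ}
    (hQ : Q.PosSemidef) (P : ι → κ) : (Q.blockApprox P).PosSemidef := by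
  let E : Matrix ι κ ℝ := Matrix.of fun i k => if P i = k then 1 else 0
  have hE : Q.blockApprox P = Q ⊙ (E * Eᴴ) := by
    ext i j
    by_cases h : P i = P j <;> simp [Matrix.blockApprox, E, mul_apply, h]
  rw [hE]
  exact hQ.hadamard (posSemidef_self_mul_conjTranspose E)

end Matrix

section OdmDual

variable {ι : Type*} [Fintype ι] (A : Matrix ι ι ℝ) (ρ υ θ : ℝ)

/-- The weight `ρ` is `M c` for `d` and `m c` for `d̃`. -/
noncomputable def odmDual (ζ β : ι → ℝ) : ℝ :=
  (1 / 2) * ((ζ - β) ⬝ᵥ A *ᵥ (ζ - β)) + ρ / 2 * (υ * (ζ ⬝ᵥ ζ) + β ⬝ᵥ β)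
    + (θ - 1) * ∑ i, ζ i + (θ + 1) * ∑ i, β i

/-- This is the directional derivative of `odmDual` only for symmetric `A`. -/
def odmDualDeriv (ζ β u v : ι → ℝ) : ℝ :=
  (u - v) ⬝ᵥ A *ᵥ (ζ - β) + ρ * (υ * (ζ ⬝ᵥ u) + β ⬝ᵥ v)
    + (θ - 1) * ∑ i, u i + (θ + 1) * ∑ i, v i

lemma odmDual_eq_sum (ζ β : ι → ℝ) :
    odmDual A ρ υ θ ζ β = (1 / 2) * ∑ i, ∑ j, (ζ i - β i) * (ζ j - β j) * A i j
      + (ρ / 2) * (υ * ∑ i, (ζ i) ^ 2 + ∑ i, (β i) ^ 2)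
      + (θ - 1) * ∑ i, ζ i + (θ + 1) * ∑ i, β i := by
  simp only [odmDual, sum_sum_mul_mul_eq_dotProduct_mulVec, dotProduct, sq]
  rfl

variable {A ρ υ θ}

lemma odmDual_add_smul (hA : A.IsSymm) (ζ β u v : ι → ℝ) (t : ℝ) :
    odmDual A ρ υ θ (ζ + t • u) (β + t • v)
      = odmDual A ρ υ θ ζ β + t * odmDualDeriv A ρ υ θ ζ β u v
        + t ^ 2 * ((1 / 2) * ((u - v) ⬝ᵥ A *ᵥ (u - v)) + ρ / 2 * (υ * (u ⬝ᵥ u) + v ⬝ᵥ v)) := by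
  have hsub : ζ + t • u - (β + t • v) = (ζ - β) + t • (u - v) := by module
  simp only [odmDual, odmDualDeriv, hsub, mulVec_add, mulVec_smul, add_dotProduct, dotProduct_add,
    smul_dotProduct, dotProduct_smul, smul_eq_mul, Pi.add_apply, Pi.smul_apply,
    Finset.sum_add_distrib, ← Finset.mul_sum, hA.dotProduct_mulVec_comm (ζ - β) (u - v),
    dotProduct_comm u ζ, dotProduct_comm v β]
  ring

lemma odmDualDeriv_nonneg_of_isMinOn (hA : A.IsSymm) {ζ β u v : ι → ℝ}
    (hmin : IsMinOn (Function.uncurry (odmDual A ρ υ θ)) (Set.Ici 0) (ζ, β))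
    (hfeas : ∀ᶠ t in 𝓝[>] (0 : ℝ), 0 ≤ ζ + t • u ∧ 0 ≤ β + t • v) :
    0 ≤ odmDualDeriv A ρ υ θ ζ β u v :=
  nonneg_of_eventually_le_add_mul_add_sq <| hfeas.mono fun t ht =>
    by simpa only [Function.uncurry_apply_pair, odmDual_add_smul hA] using
      isMinOn_iff.1 hmin (ζ + t • u, β + t • v) ht

lemma odmDualDeriv_sub_nonneg_of_isMinOn (hA : A.IsSymm) {ζ β ζ' β' : ι → ℝ}
    (hζ : 0 ≤ ζ) (hβ : 0 ≤ β) (hζ' : 0 ≤ ζ') (hβ' : 0 ≤ β')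
    (hmin : IsMinOn (Function.uncurry (odmDual A ρ υ θ)) (Set.Ici 0) (ζ, β)) :
    0 ≤ odmDualDeriv A ρ υ θ ζ β (ζ' - ζ) (β' - β) := by
  refine odmDualDeriv_nonneg_of_isMinOn hA hmin ?_
  filter_upwards [Ioc_mem_nhdsGT one_pos] with t ⟨ht0, ht1⟩
  exact (convex_Ici (0 : (ι → ℝ) × (ι → ℝ))).add_smul_sub_mem (x := (ζ, β)) (y := (ζ', β'))
    ⟨hζ, hβ⟩ ⟨hζ', hβ'⟩ ⟨ht0.le, ht1⟩

/-- Lowering `ζ i` and `β i` by the same amount leaves `ζ - β` unchanged and strictly decreases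
the rest of the objective. -/
lemma odmDual_eq_zero_or_eq_zero_of_isMinOn (hA : A.IsSymm) (hρ : 0 < ρ) (hυ : 0 < υ)
    (hθ : 0 ≤ θ) {ζ β : ι → ℝ} (hζ : 0 ≤ ζ) (hβ : 0 ≤ β)
    (hmin : IsMinOn (Function.uncurry (odmDual A ρ υ θ)) (Set.Ici 0) (ζ, β)) (i : ι) :
    ζ i = 0 ∨ β i = 0 := by
  classical
  by_contra! h
  have hζi : 0 < ζ i := (hζ i).lt_of_ne' h.1
  have hβi : 0 < β i := (hβ i).lt_of_ne' h.2
  have hderiv := odmDualDeriv_nonneg_of_isMinOn (u := Pi.single i (-1)) (v := Pi.single i (-1))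
    hA hmin ?_
  · have : odmDualDeriv A ρ υ θ ζ β (Pi.single i (-1)) (Pi.single i (-1))
        = -(ρ * (υ * ζ i + β i)) - 2 * θ := by
      simp only [odmDualDeriv, sub_self, zero_dotProduct, dotProduct_single, mul_neg, mul_one,
        zero_add, sum_pi_single', mem_univ, ↓reduceIte, neg_sub, neg_add_rev]
      ring
    have : 0 < ρ * (υ * ζ i + β i) := by positivity
    linarith
  · filter_upwards [Ioo_mem_nhdsGT (lt_min hζi hβi)] with t ⟨_, ht⟩
    obtain ⟨htζ, htβ⟩ := lt_min_iff.1 ht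
    refine ⟨fun j => ?_, fun j => ?_⟩ <;> by_cases hj : j = i
    · simp [hj, htζ.le]
    · simpa [hj] using hζ j
    · simp [hj, htβ.le]
    · simpa [hj] using hβ j

lemma odmDualDeriv_sub_add_odmDualDeriv_sub (A B : Matrix ι ι ℝ) (ρ ρ' : ℝ)
    (ζ β ζ' β' : ι → ℝ) :
    odmDualDeriv A ρ υ θ ζ β (ζ' - ζ) (β' - β) + odmDualDeriv B ρ' υ θ ζ' β' (ζ - ζ') (β - β')
      = ((ζ' - β') - (ζ - β)) ⬝ᵥ A *ᵥ (ζ - β) - ((ζ' - β') - (ζ - β)) ⬝ᵥ B *ᵥ (ζ' - β')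
        + (ρ - ρ') * (υ * (ζ' ⬝ᵥ (ζ' - ζ)) + β' ⬝ᵥ (β' - β))
        - ρ * (υ * ((ζ' - ζ) ⬝ᵥ (ζ' - ζ)) + (β' - β) ⬝ᵥ (β' - β)) := by
  simp only [odmDualDeriv, sub_dotProduct, dotProduct_sub, mulVec_sub, Pi.sub_apply,
    Finset.sum_sub_distrib, dotProduct_comm ζ ζ', dotProduct_comm β β']
  ring

end OdmDual

lemma apply_le_of_norm_sumElim_le {ι : Type*} [Fintype ι] {x y : ι → ℝ} {U : ℝ}
    (h : ‖Sum.elim x y‖ ≤ U) (i : ι) : x i ≤ U ∧ y i ≤ U :=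
  ⟨(le_abs_self _).trans ((norm_le_pi_norm (Sum.elim x y) (.inl i)).trans h),
    (le_abs_self _).trans ((norm_le_pi_norm (Sum.elim x y) (.inr i)).trans h)⟩

lemma mul_mul_sub_add_mul_sub_le_sq {υ a a' b b' U : ℝ} (hυ0 : 0 ≤ υ) (hυ1 : υ ≤ 1)
    (ha : 0 ≤ a) (haU : a ≤ U) (ha' : 0 ≤ a') (hb : 0 ≤ b) (hbU : b ≤ U) (hb' : 0 ≤ b')
    (hab : a = 0 ∨ b = 0) : υ * (a * (a - a')) + b * (b - b') ≤ U ^ 2 := by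
  have hυa : υ * (a * a) ≤ a * a := mul_le_of_le_one_left (mul_nonneg ha ha) hυ1
  rcases hab with rfl | rfl
  · nlinarith [mul_le_mul hbU hbU hb (hb.trans hbU)]
  · nlinarith [mul_le_mul haU haU ha (ha.trans haU), mul_nonneg hυ0 (mul_nonneg ha ha')]

theorem odmDual_solution_gap {ι : Type*} [Fintype ι] {A B : Matrix ι ι ℝ}
    (hA : A.PosSemidef) (hB : B.PosSemidef) {ρ ρ' υ θ U : ℝ} (hρ' : 0 < ρ') (hρ'ρ : ρ' ≤ ρ)
    (hυ0 : 0 < υ) (hυ1 : υ ≤ 1) (hθ : 0 ≤ θ) {ζs βs ζt βt : ι → ℝ}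
    (hζs : 0 ≤ ζs) (hβs : 0 ≤ βs) (hζt : 0 ≤ ζt) (hβt : 0 ≤ βt)
    (hmin : IsMinOn (Function.uncurry (odmDual A ρ υ θ)) (Set.Ici 0) (ζs, βs))
    (hmint : IsMinOn (Function.uncurry (odmDual B ρ' υ θ)) (Set.Ici 0) (ζt, βt))
    (hUs : ‖Sum.elim ζs βs‖ ≤ U) (hUt : ‖Sum.elim ζt βt‖ ≤ U) :
    ρ * υ * ((ζt - ζs) ⬝ᵥ (ζt - ζs) + (βt - βs) ⬝ᵥ (βt - βs))
      ≤ U ^ 2 * (∑ i, ∑ j, |(A - B) i j| + (ρ - ρ') * Fintype.card ι) := by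
  have hAs : A.IsSymm := isHermitian_iff_isSymm.1 hA.isHermitian
  have hBs : B.IsSymm := isHermitian_iff_isSymm.1 hB.isHermitian
  have hopt := add_nonneg (odmDualDeriv_sub_nonneg_of_isMinOn hAs hζs hβs hζt hβt hmin)
    (odmDualDeriv_sub_nonneg_of_isMinOn hBs hζt hβt hζs hβs hmint)
  rw [odmDualDeriv_sub_add_odmDualDeriv_sub] at hopt
  have habs (x y : ι → ℝ) (hx : 0 ≤ x) (hy : 0 ≤ y) (h : ‖Sum.elim x y‖ ≤ U) (i : ι) :
      |(x - y) i| ≤ U := by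
    have hxi : 0 ≤ x i := hx i
    have hyi : 0 ≤ y i := hy i
    have := apply_le_of_norm_sumElim_le h i
    exact abs_sub_le_iff.2 ⟨by linarith, by linarith⟩
  have hcross := sub_dotProduct_mulVec_sub_le_half hA hB (ζs - βs) (ζt - βt)
  have hRt := abs_le.1 (abs_dotProduct_mulVec_le (A - B) (habs ζt βt hζt hβt hUt))
  have hRs := abs_le.1 (abs_dotProduct_mulVec_le (A - B) (habs ζs βs hζs hβs hUs))
  have hreg : υ * (ζt ⬝ᵥ (ζt - ζs)) + βt ⬝ᵥ (βt - βs) ≤ Fintype.card ι * U ^ 2 := by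
    have hcomp := odmDual_eq_zero_or_eq_zero_of_isMinOn hBs hρ' hυ0 hθ hζt hβt hmint
    simp only [dotProduct, Finset.mul_sum, ← Finset.sum_add_distrib, Pi.sub_apply]
    refine (Finset.sum_le_card_nsmul _ _ _ fun i _ => ?_).trans_eq (nsmul_eq_mul _ _)
    exact mul_mul_sub_add_mul_sub_le_sq hυ0.le hυ1 (hζt i) (apply_le_of_norm_sumElim_le hUt i).1
      (hζs i) (hβt i) (apply_le_of_norm_sumElim_le hUt i).2 (hβs i) (hcomp i)
  have hreg' := mul_le_mul_of_nonneg_left hreg (sub_nonneg.2 hρ'ρ)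
  have hυβ : υ * ((βt - βs) ⬝ᵥ (βt - βs)) ≤ (βt - βs) ⬝ᵥ (βt - βs) :=
    mul_le_of_le_one_left (by simpa using dotProduct_self_star_nonneg (βt - βs)) hυ1
  have hυβ' := mul_le_mul_of_nonneg_left hυβ (hρ'.le.trans hρ'ρ)
  linarith

theorem sodm_solution_gap_general
    (M K m : ℕ) (c υ θ : ℝ)
    (hc : 0 < c) (hυ0 : 0 < υ) (hυ1 : υ ≤ 1) (hθ0 : 0 ≤ θ)
    (Q : Matrix (Fin M) (Fin M) ℝ) (hQ : Q.PosSemidef)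
    (P : Fin M → Fin K) (hM : M = K * m)
    (d dt : (Fin M → ℝ) → (Fin M → ℝ) → ℝ)
    (hd : ∀ ζ β : Fin M → ℝ, d ζ β =
      (1/2) * ∑ i, ∑ j, (ζ i - β i) * (ζ j - β j) * Q i j
      + ((M : ℝ) * c / 2) * (υ * ∑ i, (ζ i)^2 + ∑ i, (β i)^2)
      + (θ - 1) * ∑ i, ζ i + (θ + 1) * ∑ i, β i)
    (hdt : ∀ ζ β : Fin M → ℝ, dt ζ β =
      (1/2) * ∑ i, ∑ j, (ζ i - β i) * (ζ j - β j) * (if P i = P j then Q i j else 0)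
      + ((m : ℝ) * c / 2) * (υ * ∑ i, (ζ i)^2 + ∑ i, (β i)^2)
      + (θ - 1) * ∑ i, ζ i + (θ + 1) * ∑ i, β i)
    (ζs βs ζt βt : Fin M → ℝ)
    (hζs : ∀ i, 0 ≤ ζs i) (hβs : ∀ i, 0 ≤ βs i)
    (hζt : ∀ i, 0 ≤ ζt i) (hβt : ∀ i, 0 ≤ βt i)
    (hmin : ∀ ζ β : Fin M → ℝ, (∀ i, 0 ≤ ζ i) → (∀ i, 0 ≤ β i) → d ζs βs ≤ d ζ β)
    (hmint : ∀ ζ β : Fin M → ℝ, (∀ i, 0 ≤ ζ i) → (∀ i, 0 ≤ β i) → dt ζt βt ≤ dt ζ β)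
    (U Qhat : ℝ)
    (hU : U = max ‖Sum.elim ζs βs‖ ‖Sum.elim ζt βt‖)
    (hQhat : Qhat = ∑ i, ∑ j, if P i ≠ P j then |Q i j| else 0) :
    ∑ x : Fin M ⊕ Fin M, (Sum.elim ζt βt x - Sum.elim ζs βs x)^2 ≤
      (U^2 / ((M : ℝ) * c * υ)) * (Qhat + (M : ℝ) * ((M : ℝ) - (m : ℝ)) * c) := by
  obtain rfl | hMpos := M.eq_zero_or_pos
  · simp
  have hK : 0 < K := Nat.pos_of_mul_pos_right (hM ▸ hMpos)
  have hm : 0 < m := Nat.pos_of_mul_pos_left (hM ▸ hMpos)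
  have hmM : (m : ℝ) ≤ M := by exact_mod_cast hM ▸ Nat.le_mul_of_pos_left m hK
  obtain rfl : d = odmDual Q (M * c) υ θ :=
    funext₂ fun ζ β => (hd ζ β).trans (odmDual_eq_sum ..).symm
  obtain rfl : dt = odmDual (Q.blockApprox P) (m * c) υ θ :=
    funext₂ fun ζ β => (hdt ζ β).trans (odmDual_eq_sum ..).symm
  have hgap := odmDual_solution_gap hQ (hQ.blockApprox P) (by positivity)
    (mul_le_mul_of_nonneg_right hmM hc.le) hυ0 hυ1 hθ0 hζs hβs hζt hβt
    (fun p hp => hmin p.1 p.2 hp.1 hp.2) (fun p hp => hmint p.1 p.2 hp.1 hp.2)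
    (hU ▸ le_max_left _ _) (hU ▸ le_max_right _ _)
  have hQhat' : Qhat = ∑ i, ∑ j, |(Q - Q.blockApprox P) i j| := by
    rw [hQhat]
    refine Finset.sum_congr rfl fun i _ => Finset.sum_congr rfl fun j _ => ?_
    by_cases h : P i = P j <;> simp [Matrix.blockApprox, h]
  have hlhs : ∑ x : Fin M ⊕ Fin M, (Sum.elim ζt βt x - Sum.elim ζs βs x)^2
      = (ζt - ζs) ⬝ᵥ (ζt - ζs) + (βt - βs) ⬝ᵥ (βt - βs) := by
    simp [Fintype.sum_sum_type, dotProduct, sq]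
  rw [hlhs, div_mul_eq_mul_div, le_div_iff₀ (by positivity), hQhat']
  rw [Fintype.card_fin] at hgap
  linarith

/-- Theorem 1 (solution gap) of "Scalable Optimal Margin Distribution Machine":
if `αs = [ζs; βs]` minimizes the ODM dual objective `d` over the nonnegative orthant
and `αt = [ζt; βt]` minimizes the block-diagonal approximate dual objective `dt` over
the nonnegative orthant, then `‖αt - αs‖² ≤ (U²/(M c υ)) (Q̂ + M (M - m) c)`. -/
theorem sodm_solution_gap
    (M K m : ℕ) (c υ θ : ℝ)
    (hc : 0 < c) (hυ0 : 0 < υ) (hυ1 : υ ≤ 1) (hθ0 : 0 ≤ θ) (hθ1 : θ < 1)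
    (Q : Matrix (Fin M) (Fin M) ℝ) (hQ : Q.PosSemidef)
    (P : Fin M → Fin K) (hM : M = K * m)
    (hfiber : ∀ k : Fin K, (Finset.univ.filter fun i => P i = k).card = m)
    (d dt : (Fin M → ℝ) → (Fin M → ℝ) → ℝ)
    (hd : ∀ ζ β : Fin M → ℝ, d ζ β =
      (1/2) * ∑ i, ∑ j, (ζ i - β i) * (ζ j - β j) * Q i j
      + ((M : ℝ) * c / 2) * (υ * ∑ i, (ζ i)^2 + ∑ i, (β i)^2)
      + (θ - 1) * ∑ i, ζ i + (θ + 1) * ∑ i, β i)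
    (hdt : ∀ ζ β : Fin M → ℝ, dt ζ β =
      (1/2) * ∑ i, ∑ j, (ζ i - β i) * (ζ j - β j) * (if P i = P j then Q i j else 0)
      + ((m : ℝ) * c / 2) * (υ * ∑ i, (ζ i)^2 + ∑ i, (β i)^2)
      + (θ - 1) * ∑ i, ζ i + (θ + 1) * ∑ i, β i)
    (ζs βs ζt βt : Fin M → ℝ)
    (hζs : ∀ i, 0 ≤ ζs i) (hβs : ∀ i, 0 ≤ βs i)
    (hζt : ∀ i, 0 ≤ ζt i) (hβt : ∀ i, 0 ≤ βt i)
    (hmin : ∀ ζ β : Fin M → ℝ, (∀ i, 0 ≤ ζ i) → (∀ i, 0 ≤ β i) → d ζs βs ≤ d ζ β)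
    (hmint : ∀ ζ β : Fin M → ℝ, (∀ i, 0 ≤ ζ i) → (∀ i, 0 ≤ β i) → dt ζt βt ≤ dt ζ β)
    (U Qhat : ℝ)
    (hU : U = max ‖Sum.elim ζs βs‖ ‖Sum.elim ζt βt‖)
    (hQhat : Qhat = ∑ i, ∑ j, if P i ≠ P j then |Q i j| else 0) :
    ∑ x : Fin M ⊕ Fin M, (Sum.elim ζt βt x - Sum.elim ζs βs x)^2 ≤
      (U^2 / ((M : ℝ) * c * υ)) * (Qhat + (M : ℝ) * ((M : ℝ) - (m : ℝ)) * c) :=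
  sodm_solution_gap_general M K m c υ θ hc hυ0 hυ1 hθ0 Q hQ P hM d dt hd hdt ζs βs ζt βt hζs hβs hζt
    hβt hmin hmint U Qhat hU hQhat
end

section
/- Complementary slackness of the ODM dual: if c > 0, υ ∈ (0,1], θ ∈ [0,1], and (ζ*, β*) minimizes the ODM dual objective d over the nonnegative orthant {(ζ, β) : ζ ⪰ 0, β ⪰ 0}, then ζ*_i · β*_i = 0 for every index i ∈ {1,…,M}. -/
open Finset

set_option maxHeartbeats 1000000 in
/-- Complementary slackness of the ODM dual: if `(ζs, βs)` minimizes the ODM dual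
objective `d` over the nonnegative orthant, then `ζs i * βs i = 0` for all `i`. -/
theorem sodm_complementary_slackness
    (M : ℕ) (c υ θ : ℝ)
    (hc : 0 < c) (hυ0 : 0 < υ) (hυ1 : υ ≤ 1) (hθ0 : 0 ≤ θ) (hθ1 : θ ≤ 1)
    (Q : Matrix (Fin M) (Fin M) ℝ) (hQ : Q.IsSymm)
    (d : (Fin M → ℝ) → (Fin M → ℝ) → ℝ)
    (hd : ∀ ζ β : Fin M → ℝ, d ζ β =
      (1/2) * ∑ i, ∑ j, (ζ i - β i) * (ζ j - β j) * Q i j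
      + ((M : ℝ) * c / 2) * (υ * ∑ i, (ζ i)^2 + ∑ i, (β i)^2)
      + (θ - 1) * ∑ i, ζ i + (θ + 1) * ∑ i, β i)
    (ζs βs : Fin M → ℝ)
    (hζs : ∀ i, 0 ≤ ζs i) (hβs : ∀ i, 0 ≤ βs i)
    (hmin : ∀ ζ β : Fin M → ℝ, (∀ i, 0 ≤ ζ i) → (∀ i, 0 ≤ β i) → d ζs βs ≤ d ζ β) :
    ∀ i : Fin M, ζs i * βs i = 0 := by
  intro i
  by_contra h
  have hζi : 0 < ζs i := lt_of_le_of_ne (hζs i) (fun h' => h (by rw [← h']; ring))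
  have hβi : 0 < βs i := lt_of_le_of_ne (hβs i) (fun h' => h (by rw [← h']; ring))
  set t : ℝ := min (ζs i) (βs i) with ht_def
  have ht : 0 < t := lt_min hζi hβi
  have htζ : t ≤ ζs i := min_le_left _ _
  have htβ : t ≤ βs i := min_le_right _ _
  set ζ' : Fin M → ℝ := Function.update ζs i (ζs i - t) with hζ'def
  set β' : Fin M → ℝ := Function.update βs i (βs i - t) with hβ'def
  have hζ'nn : ∀ j, 0 ≤ ζ' j := by
    intro j
    by_cases hj : j = i
    · subst hj; simp [hζ'def]; linarith
    · simp [hζ'def, Function.update_of_ne hj]; exact hζs j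
  have hβ'nn : ∀ j, 0 ≤ β' j := by
    intro j
    by_cases hj : j = i
    · subst hj; simp [hβ'def]; linarith
    · simp [hβ'def, Function.update_of_ne hj]; exact hβs j
  have h1 : ∀ j, ζ' j - β' j = ζs j - βs j := by
    intro j
    by_cases hj : j = i
    · subst hj; simp [hζ'def, hβ'def]
    · simp [hζ'def, hβ'def, Function.update_of_ne hj]
  have hQeq : ∑ j, ∑ k, (ζ' j - β' j) * (ζ' k - β' k) * Q j k
      = ∑ j, ∑ k, (ζs j - βs j) * (ζs k - βs k) * Q j k := by
    refine Finset.sum_congr rfl fun j _ => Finset.sum_congr rfl fun k _ => ?_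
    rw [h1, h1]
  have hS1 : ∑ j, ((ζ' j)^2 - (ζs j)^2) = (ζs i - t)^2 - (ζs i)^2 := by
    rw [Finset.sum_eq_single i]
    · simp [hζ'def]
    · intro j _ hj; simp [hζ'def, Function.update_of_ne hj]
    · simp
  have hS2 : ∑ j, ((β' j)^2 - (βs j)^2) = (βs i - t)^2 - (βs i)^2 := by
    rw [Finset.sum_eq_single i]
    · simp [hβ'def]
    · intro j _ hj; simp [hβ'def, Function.update_of_ne hj]
    · simp
  have hL1 : ∑ j, (ζ' j - ζs j) = -t := by
    rw [Finset.sum_eq_single i]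
    · simp [hζ'def]
    · intro j _ hj; simp [hζ'def, Function.update_of_ne hj]
    · simp
  have hL2 : ∑ j, (β' j - βs j) = -t := by
    rw [Finset.sum_eq_single i]
    · simp [hβ'def]
    · intro j _ hj; simp [hβ'def, Function.update_of_ne hj]
    · simp
  have hS1' : ∑ j, (ζ' j)^2 = ∑ j, (ζs j)^2 + ((ζs i - t)^2 - (ζs i)^2) := by
    rw [← hS1, Finset.sum_sub_distrib]; ring
  have hS2' : ∑ j, (β' j)^2 = ∑ j, (βs j)^2 + ((βs i - t)^2 - (βs i)^2) := by
    rw [← hS2, Finset.sum_sub_distrib]; ring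
  have hL1' : ∑ j, ζ' j = ∑ j, ζs j - t := by
    have := hL1; rw [Finset.sum_sub_distrib] at this; linarith
  have hL2' : ∑ j, β' j = ∑ j, βs j - t := by
    have := hL2; rw [Finset.sum_sub_distrib] at this; linarith
  have hdiff : d ζ' β' = d ζs βs
      + ((M : ℝ) * c / 2) * (υ * ((ζs i - t)^2 - (ζs i)^2) + ((βs i - t)^2 - (βs i)^2))
      - 2 * θ * t := by
    rw [hd ζ' β', hd ζs βs, hQeq, hS1', hS2', hL1', hL2']
    ring
  have hle := hmin ζ' β' hζ'nn hβ'nn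
  have hM : (1 : ℝ) ≤ (M : ℝ) := by
    have := i.pos
    exact_mod_cast this
  have hA : (ζs i - t)^2 - (ζs i)^2 ≤ -t^2 := by nlinarith
  have hB : (βs i - t)^2 - (βs i)^2 ≤ -t^2 := by nlinarith
  have hneg : ((M : ℝ) * c / 2) * (υ * ((ζs i - t)^2 - (ζs i)^2) + ((βs i - t)^2 - (βs i)^2))
      - 2 * θ * t < 0 := by
    have hMc : 0 < (M : ℝ) * c / 2 := by positivity
    have h3 : υ * ((ζs i - t)^2 - (ζs i)^2) + ((βs i - t)^2 - (βs i)^2) < 0 := by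
      nlinarith [mul_pos ht ht, mul_pos hυ0 (mul_pos ht ht)]
    have h4 := mul_neg_of_pos_of_neg hMc h3
    have h5 : 0 ≤ 2 * θ * t := by positivity
    linarith
  rw [hdiff] at hle
  linarith
end

section
/- Let Q ∈ ℝ^{M×M} be symmetric positive semidefinite, c > 0, υ ∈ (0,1], H = [[Q + Mcυ·I, −Q], [−Q, Q + Mc·I]] ∈ ℝ^{2M×2M}, b ∈ ℝ^{2M}, and f(α) = (1/2)αᵀHα + bᵀα. If α* minimizes f over the nonnegative orthant {α ∈ ℝ^{2M} : α ⪰ 0}, then for every α̃ ⪰ 0 one has f(α̃) − f(α*) ≥ (Mcυ/2)·‖α̃ − α*‖². -/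
/-!
A minimizer `x` of `f z = ½ zᵀHz + bᵀz` over a convex set satisfies
`f y - f x ≥ ½ (y - x)ᵀH(y - x)`: along the feasible segment `x + t (y - x)`, `t ∈ (0, 1]`,
`f` equals `f x + t L + t² q / 2 ≥ f x`, which forces the slope `L` to be nonnegative, and then
`f y = f x + L + q / 2`. The ODM Hessian has quadratic form
`(u - v)ᵀQ(u - v) + Mcυ ‖u‖² + Mc ‖v‖² ≥ Mcυ ‖(u, v)‖²`, since `Q ⪰ 0` and `υ ≤ 1`.
-/

open Matrix

open Filter Topology in
theorem nonneg_of_forall_mul_add_sq_mul_nonneg {L q : ℝ}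
    (h : ∀ t : ℝ, 0 < t → t ≤ 1 → 0 ≤ t * L + t ^ 2 / 2 * q) : 0 ≤ L := by
  have hlim : Tendsto (fun t : ℝ => L + t / 2 * q) (𝓝[>] 0) (𝓝 L) := by
    refine (Continuous.tendsto' ?_ 0 L ?_).mono_left nhdsWithin_le_nhds
    · fun_prop
    · simp
  refine ge_of_tendsto hlim ?_
  filter_upwards [Ioc_mem_nhdsGT (zero_lt_one' ℝ)] with t ⟨ht0, ht1⟩
  have := h t ht0 ht1
  nlinarith

variable {ι : Type*} [Fintype ι]

theorem quadratic_add_smul_eq (H : Matrix ι ι ℝ) (b x d : ι → ℝ) (t : ℝ) :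
    (1 / 2) * ((x + t • d) ⬝ᵥ H *ᵥ (x + t • d)) + b ⬝ᵥ (x + t • d) =
      ((1 / 2) * (x ⬝ᵥ H *ᵥ x) + b ⬝ᵥ x)
        + t * ((1 / 2) * (d ⬝ᵥ H *ᵥ x + x ⬝ᵥ H *ᵥ d) + b ⬝ᵥ d)
        + t ^ 2 / 2 * (d ⬝ᵥ H *ᵥ d) := by
  simp only [mulVec_add, mulVec_smul, dotProduct_add, add_dotProduct, dotProduct_smul,
    smul_dotProduct, smul_eq_mul]
  ring

theorem half_quadForm_sub_le_of_isMinOn (H : Matrix ι ι ℝ) (b : ι → ℝ) {K : Set (ι → ℝ)}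
    (hK : Convex ℝ K) {x y : ι → ℝ} (hx : x ∈ K) (hy : y ∈ K)
    (hmin : IsMinOn (fun z => (1 / 2) * (z ⬝ᵥ H *ᵥ z) + b ⬝ᵥ z) K x) :
    (1 / 2) * ((y - x) ⬝ᵥ H *ᵥ (y - x)) ≤
      ((1 / 2) * (y ⬝ᵥ H *ᵥ y) + b ⬝ᵥ y) - ((1 / 2) * (x ⬝ᵥ H *ᵥ x) + b ⬝ᵥ x) := by
  set d := y - x
  have hslope : 0 ≤ (1 / 2) * (d ⬝ᵥ H *ᵥ x + x ⬝ᵥ H *ᵥ d) + b ⬝ᵥ d := by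
    refine nonneg_of_forall_mul_add_sq_mul_nonneg (q := d ⬝ᵥ H *ᵥ d) fun t ht0 ht1 => ?_
    have hmem : x + t • d ∈ K := by
      simpa [d] using hK.add_smul_sub_mem hx hy ⟨ht0.le, ht1⟩
    have := isMinOn_iff.mp hmin _ hmem
    rw [quadratic_add_smul_eq] at this
    linarith
  have hy' : y = x + (1 : ℝ) • d := by simp [d]
  rw [hy', quadratic_add_smul_eq]
  linarith

variable {n : Type*} [Fintype n] [DecidableEq n]

theorem mul_dotProduct_self_le_fromBlocks_quadForm {Q : Matrix n n ℝ} (hQ : Q.PosSemidef)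
    {a a' : ℝ} (haa' : a ≤ a') (d : n ⊕ n → ℝ) :
    a * (d ⬝ᵥ d) ≤ d ⬝ᵥ fromBlocks (Q + a • 1) (-Q) (-Q) (Q + a' • 1) *ᵥ d := by
  set u : n → ℝ := d ∘ Sum.inl
  set v : n → ℝ := d ∘ Sum.inr
  have hd : d = Sum.elim u v := (Sum.elim_comp_inl_inr d).symm
  have hQuv : 0 ≤ (u - v) ⬝ᵥ Q *ᵥ (u - v) := hQ.dotProduct_mulVec_nonneg (u - v)
  have hvv : 0 ≤ v ⬝ᵥ v := Finset.sum_nonneg fun i _ => mul_self_nonneg _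
  have hform : d ⬝ᵥ fromBlocks (Q + a • 1) (-Q) (-Q) (Q + a' • 1) *ᵥ d =
      (u - v) ⬝ᵥ Q *ᵥ (u - v) + a * (u ⬝ᵥ u) + a' * (v ⬝ᵥ v) := by
    rw [hd, fromBlocks_mulVec, sumElim_dotProduct_sumElim]
    simp only [Sum.elim_comp_inl, Sum.elim_comp_inr, add_mulVec, neg_mulVec, smul_mulVec,
      one_mulVec, mulVec_sub, dotProduct_add, dotProduct_neg, dotProduct_smul, sub_dotProduct,
      dotProduct_sub, smul_eq_mul]
    ring
  have hsplit : d ⬝ᵥ d = u ⬝ᵥ u + v ⬝ᵥ v := by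
    rw [hd, sumElim_dotProduct_sumElim]
  rw [hform, hsplit]
  nlinarith

theorem sodm_quadratic_growth_general
    (M : ℕ) (c υ : ℝ) (hc : 0 < c) (hυ1 : υ ≤ 1)
    (Q : Matrix (Fin M) (Fin M) ℝ) (hQ : Q.PosSemidef)
    (H : Matrix (Fin M ⊕ Fin M) (Fin M ⊕ Fin M) ℝ)
    (hH : H = Matrix.fromBlocks
      (Q + ((M : ℝ) * c * υ) • (1 : Matrix (Fin M) (Fin M) ℝ)) (-Q)
      (-Q) (Q + ((M : ℝ) * c) • (1 : Matrix (Fin M) (Fin M) ℝ)))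
    (b : Fin M ⊕ Fin M → ℝ)
    (f : (Fin M ⊕ Fin M → ℝ) → ℝ)
    (hf : ∀ α : Fin M ⊕ Fin M → ℝ, f α = (1/2) * (α ⬝ᵥ H.mulVec α) + b ⬝ᵥ α)
    (αs : Fin M ⊕ Fin M → ℝ) (hαs : ∀ x, 0 ≤ αs x)
    (hmin : ∀ α : Fin M ⊕ Fin M → ℝ, (∀ x, 0 ≤ α x) → f αs ≤ f α) :
    ∀ αt : Fin M ⊕ Fin M → ℝ, (∀ x, 0 ≤ αt x) →
      ((M : ℝ) * c * υ / 2) * ∑ x, (αt x - αs x)^2 ≤ f αt - f αs := by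
  intro αt hαt
  obtain rfl : f = _ := funext hf
  have hgrowth :=
    half_quadForm_sub_le_of_isMinOn H b (convex_Ici 0) hαs hαt (isMinOn_iff.mpr hmin)
  have hυc : (M : ℝ) * c * υ ≤ M * c := mul_le_of_le_one_right (by positivity) hυ1
  have hform := hH ▸ mul_dotProduct_self_le_fromBlocks_quadForm hQ hυc (αt - αs)
  have hsum : ∑ x, (αt x - αs x) ^ 2 = (αt - αs) ⬝ᵥ (αt - αs) := by
    simp only [dotProduct, Pi.sub_apply, sq]
  rw [hsum]
  linarith

/-- Quadratic growth of the ODM dual objective around its constrained minimizer: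
if `αs` minimizes `f(α) = (1/2) αᵀ H α + bᵀ α` over the nonnegative orthant, where
`H = [[Q + Mcυ·I, -Q], [-Q, Q + Mc·I]]` with `Q ⪰ 0`, then for every `αt ⪰ 0`,
`f αt - f αs ≥ (Mcυ/2) ‖αt - αs‖²`. -/
theorem sodm_quadratic_growth
    (M : ℕ) (c υ : ℝ) (hc : 0 < c) (hυ0 : 0 < υ) (hυ1 : υ ≤ 1)
    (Q : Matrix (Fin M) (Fin M) ℝ) (hQ : Q.PosSemidef)
    (H : Matrix (Fin M ⊕ Fin M) (Fin M ⊕ Fin M) ℝ)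
    (hH : H = Matrix.fromBlocks
      (Q + ((M : ℝ) * c * υ) • (1 : Matrix (Fin M) (Fin M) ℝ)) (-Q)
      (-Q) (Q + ((M : ℝ) * c) • (1 : Matrix (Fin M) (Fin M) ℝ)))
    (b : Fin M ⊕ Fin M → ℝ)
    (f : (Fin M ⊕ Fin M → ℝ) → ℝ)
    (hf : ∀ α : Fin M ⊕ Fin M → ℝ, f α = (1/2) * (α ⬝ᵥ H.mulVec α) + b ⬝ᵥ α)
    (αs : Fin M ⊕ Fin M → ℝ) (hαs : ∀ x, 0 ≤ αs x)
    (hmin : ∀ α : Fin M ⊕ Fin M → ℝ, (∀ x, 0 ≤ α x) → f αs ≤ f α) :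
    ∀ αt : Fin M ⊕ Fin M → ℝ, (∀ x, 0 ≤ αt x) →
      ((M : ℝ) * c * υ / 2) * ∑ x, (αt x - αs x)^2 ≤ f αt - f αs :=
  sodm_quadratic_growth_general M c υ hc hυ1 Q hQ H hH b f hf αs hαs hmin
end
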